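/- Let K be a division ring, Q a finite quiver, sigma : Q_1 -> Aut(K), and (Q,Z) locally gentle. In Lambda = K_sigma Q/<Z>, the images of the paths of Q that contain no subpath from Z form a left K-basis of Lambda. Consequently Lambda is finite-dimensional over K if and only if (Q,Z) is gentle. -/

import Mathlib

attribute [local instance] Classical.propDecidable

/-- A quiver: vertices, arrows, head and tail maps. -/
structure Quiv where
  V : Type
  A : Type
  h : A → V
  t : A → V

/-- A (possibly empty) list of arrows is a path when consecutive arrows compose:
`t aᵢ = h aᵢ₊₁` (paths are written right-to-left as in the paper). -/
def Quiv.IsPath (Q : Quiv) (p : List Q.A) : Prop :=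
  p.Chain' (fun x y => Q.t x = Q.h y)

/-- A locally gentle pair `(Q,Z)`: `Z` is a set of length-2 paths (pairs `(b,a)` with
`t b = h a`), every vertex is head (resp. tail) of at most two arrows, and each arrow
extends in at most one way inside `Z` and at most one way outside `Z` on each side. -/
structure LocallyGentle (Q : Quiv) (Z : Set (Q.A × Q.A)) : Prop where
  comp : ∀ p ∈ Z, Q.t p.1 = Q.h p.2
  head_two : ∀ (v : Q.V) (a b c : Q.A),
    Q.h a = v → Q.h b = v → Q.h c = v → a = b ∨ a = c ∨ b = c
  tail_two : ∀ (v : Q.V) (a b c : Q.A),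
    Q.t a = v → Q.t b = v → Q.t c = v → a = b ∨ a = c ∨ b = c
  rel_right : ∀ b a a' : Q.A, (b, a) ∈ Z → (b, a') ∈ Z → a = a'
  adm_right : ∀ b a a' : Q.A, Q.t b = Q.h a → Q.t b = Q.h a' →
    (b, a) ∉ Z → (b, a') ∉ Z → a = a'
  rel_left : ∀ b c c' : Q.A, (c, b) ∈ Z → (c', b) ∈ Z → c = c'
  adm_left : ∀ b c c' : Q.A, Q.t c = Q.h b → Q.t c' = Q.h b →
    (c, b) ∉ Z → (c', b) ∉ Z → c = c'

/-- A vertex is relational if some relation `ba ∈ Z` passes through it,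
i.e. `t b = v = h a`. -/
def Relational (Q : Quiv) (Z : Set (Q.A × Q.A)) (v : Q.V) : Prop :=
  ∃ b a : Q.A, (b, a) ∈ Z ∧ Q.t b = v ∧ Q.h a = v

/-- A presentation of the semilinear path algebra `K_σ Q` on a ring `Λ`:
a `K`-ring structure `ι`, trivial paths `e v`, arrows `ar x`, the defining relations,
and freeness: the paths of `Q` (trivial and nontrivial) form a left `K`-basis. -/
structure SLPA (K : Type) [DivisionRing K] (Q : Quiv) [Fintype Q.V]
    (σ : Q.A → K ≃+* K) (Λ : Type) [Ring Λ] where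
  ι : K →+* Λ
  e : Q.V → Λ
  ar : Q.A → Λ
  sum_e : (∑ v : Q.V, e v) = 1
  e_idem : ∀ v : Q.V, e v * e v = e v
  e_orth : ∀ u v : Q.V, u ≠ v → e u * e v = 0
  e_comm : ∀ (v : Q.V) (lam : K), e v * ι lam = ι lam * e v
  he_ar : ∀ x : Q.A, e (Q.h x) * ar x = ar x
  ar_te : ∀ x : Q.A, ar x * e (Q.t x) = ar x
  semilinear : ∀ (x : Q.A) (lam : K), ar x * ι lam = ι (σ x lam) * ar x
  free : Function.Bijective
    (fun c : (Q.V ⊕ {p : List Q.A // p ≠ [] ∧ Q.IsPath p}) →₀ K =>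
      c.sum fun p lam => ι lam * Sum.elim e (fun q => (q.1.map ar).prod) p)

/-!
The paths form a left `K`-basis of `K_σ Q`, and multiplying a path that contains a subpath from
`Z` by a basis element, on either side, gives `0` or another such path, once the scalars are
moved to the left with `a λ = σ_a(λ) a`.  So the left `K`-span of these paths is a two-sided
ideal; it contains the generators of `⟨Z⟩` and lies in `⟨Z⟩`, hence equals `⟨Z⟩`.  A combination
of admissible paths therefore lies in `⟨Z⟩` only if it is `0`, and the admissible paths form a
basis of the quotient.
-/

theorem Finsupp.bijective_comp_embDomain {ι κ M N : Type*} [AddCommGroup M] [AddCommGroup N]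
    (Φ : (ι →₀ M) →+ N) (hΦ : Function.Surjective Φ) (j : κ ↪ ι)
    (hker : ∀ c, Φ c = 0 ↔ ↑c.support ⊆ (Set.range j)ᶜ) :
    Function.Bijective (Φ ∘ Finsupp.embDomain j) := by
  refine ⟨(injective_iff_map_eq_zero (Φ.comp (embDomain.addMonoidHom j))).mpr fun c hc => ?_,
    fun x => ?_⟩
  · have hout := (hker _).mp hc
    rw [← embDomain_eq_zero (f := j), ← support_eq_empty, ← Finset.coe_eq_empty]
    refine Set.eq_empty_of_forall_notMem fun b hb => hout hb ?_
    obtain ⟨a, -, rfl⟩ := Finset.mem_map.mp (support_embDomain j c ▸ hb)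
    exact ⟨a, rfl⟩
  · obtain ⟨c, rfl⟩ := hΦ x
    have hin : ↑(c.filter (fun b => b ∈ Set.range j)).support ⊆ Set.range j := fun b hb =>
      (Finset.mem_filter.mp (by rwa [support_filter] at hb)).2
    have hout : Φ (c.filter (fun b => b ∉ Set.range j)) = 0 := (hker _).mpr fun b hb =>
      (Finset.mem_filter.mp (by rwa [support_filter] at hb)).2
    refine ⟨comapDomain j (c.filter (fun b => b ∈ Set.range j)) j.injective.injOn, ?_⟩
    rw [Function.comp_apply, embDomain_comapDomain hin, ← add_zero (Φ _), ← hout, ← map_add,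
      filter_add_filter_not]

theorem exists_fin_spanning_iff_finite_of_bijective {K M ι : Type*} [Semiring K] [Nontrivial K]
    [AddCommMonoid M] [Module K M] {v : ι → M}
    (hv : Function.Bijective (Finsupp.linearCombination K v)) :
    (∃ (n : ℕ) (g : Fin n → M), ∀ x, ∃ c : Fin n → K, x = ∑ i, c i • g i) ↔ Finite ι := by
  let e := LinearEquiv.ofBijective _ hv
  have hfin : (∃ (n : ℕ) (g : Fin n → M), ∀ x, ∃ c : Fin n → K, x = ∑ i, c i • g i) ↔
      Module.Finite K M := by
    simp only [Module.finite_def, Submodule.fg_iff_exists_fin_generating_family,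
      Submodule.eq_top_iff', Submodule.mem_span_range_iff_exists_fun, eq_comm]
  rw [hfin]
  exact ⟨fun _ => Module.Finite.finite_basis (Module.Basis.ofRepr e.symm),
    fun _ => Module.Finite.equiv e⟩

theorem finite_sum_subtype_ne_nil_iff {V α : Type*} [Finite V] (P : List α → Prop) :
    Finite (V ⊕ {p : List α // p ≠ [] ∧ P p}) ↔ {p | P p}.Finite := by
  refine ⟨fun _ => ?_, fun h => ?_⟩
  · have hne : {p : List α | p ≠ [] ∧ P p}.Finite :=
      Set.finite_coe_iff.mp (Finite.sum_right V (β := {p : List α // p ≠ [] ∧ P p}))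
    exact .of_sdiff (hne.subset fun p hp => ⟨hp.2, hp.1⟩) (Set.finite_singleton [])
  · have : Finite {p : List α // p ≠ [] ∧ P p} := (h.subset fun _ hp => hp.2).to_subtype
    infer_instance

theorem List.prod_map_mem_span_of_not_isChain {R α : Type*} [Semiring R] (f : α → R)
    {Z : Set (α × α)} :
    ∀ {p : List α}, ¬ p.IsChain (fun x y => (x, y) ∉ Z) →
      (p.map f).prod ∈ Ideal.span {z | ∃ q ∈ Z, ∃ u, z = f q.1 * f q.2 * u}
  | [], h => absurd List.isChain_nil h
  | [_], h => absurd (List.isChain_singleton _) h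
  | x :: y :: l, h => by
    by_cases hxy : (x, y) ∈ Z
    · exact Ideal.subset_span ⟨(x, y), hxy, (l.map f).prod, by simp [mul_assoc]⟩
    · have htail : ¬ (y :: l).IsChain (fun x y => (x, y) ∉ Z) := fun hc =>
        h (List.isChain_cons_cons.mpr ⟨hxy, hc⟩)
      rw [List.map_cons, List.prod_cons]
      exact Ideal.mul_mem_left _ _ (prod_map_mem_span_of_not_isChain f htail)

namespace Quiv

variable (Q : Quiv)

def IsAdmissible (Z : Set (Q.A × Q.A)) (p : List Q.A) : Prop :=
  Q.IsPath p ∧ p.IsChain fun x y => (x, y) ∉ Z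

def IsNonAdmissible (Z : Set (Q.A × Q.A)) (p : List Q.A) : Prop :=
  p ≠ [] ∧ Q.IsPath p ∧ ¬ p.IsChain fun x y => (x, y) ∉ Z

abbrev PathIndex (P : List Q.A → Prop) : Type := Q.V ⊕ {p : List Q.A // p ≠ [] ∧ P p}

variable {Q}

theorem IsPath.append {q p : List Q.A} (hq : Q.IsPath q) (hp : Q.IsPath p)
    (h : ∀ x ∈ q.getLast?, ∀ y ∈ p.head?, Q.t x = Q.h y) : Q.IsPath (q ++ p) :=
  List.IsChain.append hq hp h

def PathIndex.incl {P P' : List Q.A → Prop} (h : ∀ p, P p → P' p) :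
    Q.PathIndex P ↪ Q.PathIndex P' :=
  (Function.Embedding.refl _).sumMap
    ((Function.Embedding.refl _).subtypeMap fun p hp => ⟨hp.1, h p hp.2⟩)

theorem PathIndex.notMem_range_incl_iff {P P' : List Q.A → Prop} (h : ∀ p, P p → P' p)
    (b : Q.PathIndex P') :
    b ∉ Set.range (incl h) ↔ ∃ q : {p : List Q.A // p ≠ [] ∧ P' p}, b = .inr q ∧ ¬ P q.1 := by
  rcases b with v | q
  · exact ⟨fun hb => (hb ⟨.inl v, rfl⟩).elim, fun ⟨_, hq, _⟩ => (Sum.inl_ne_inr hq).elim⟩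
  · refine ⟨fun hb => ⟨q, rfl, fun hq => hb ⟨.inr ⟨q.1, q.2.1, hq⟩, rfl⟩⟩, ?_⟩
    rintro ⟨q, hqeq, hq⟩ ⟨a | ⟨a, ha⟩, ha'⟩
    · cases ha'
    · cases ha'
      cases hqeq
      exact hq ha.2

def admissibleIncl (Z : Set (Q.A × Q.A)) :
    Q.PathIndex (Q.IsAdmissible Z) ↪ Q.PathIndex Q.IsPath :=
  PathIndex.incl fun _ => And.left

end Quiv

namespace SLPA

variable {K : Type} [DivisionRing K] {Q : Quiv} [Fintype Q.V] {σ : Q.A → K ≃+* K}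
  {Λ : Type} [Ring Λ] (S : SLPA K Q σ Λ)

def pathElt {P : List Q.A → Prop} : Q.PathIndex P → Λ :=
  Sum.elim S.e fun q => (q.1.map S.ar).prod

noncomputable def pathSum (P : List Q.A → Prop) : (Q.PathIndex P →₀ K) →+ Λ :=
  Finsupp.liftAddHom fun b => (AddMonoidHom.mulRight (S.pathElt b)).comp S.ι.toAddMonoidHom

theorem pathSum_apply {P : List Q.A → Prop} (c : Q.PathIndex P →₀ K) :
    S.pathSum P c = c.sum fun b k => S.ι k * S.pathElt b :=
  rfl

theorem pathSum_single {P : List Q.A → Prop} (b : Q.PathIndex P) (k : K) :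
    S.pathSum P (Finsupp.single b k) = S.ι k * S.pathElt b :=
  Finsupp.liftAddHom_apply_single _ b k

theorem pathSum_embDomain_incl {P P' : List Q.A → Prop} (h : ∀ p, P p → P' p)
    (c : Q.PathIndex P →₀ K) :
    S.pathSum P' (c.embDomain (Quiv.PathIndex.incl h)) = S.pathSum P c := by
  rw [pathSum_apply, pathSum_apply, Finsupp.sum_embDomain]
  refine Finsupp.sum_congr fun b _ => ?_
  rcases b with v | q <;> rfl

theorem closure_ι_mul_pathElt_eq_top :
    AddSubmonoid.closure {x | ∃ (k : K) (b : Q.PathIndex Q.IsPath), x = S.ι k * S.pathElt b} =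
      ⊤ := by
  refine eq_top_iff.mpr fun x _ => ?_
  obtain ⟨c, rfl⟩ := S.free.2 x
  exact AddSubmonoid.sum_mem _ fun b _ => AddSubmonoid.subset_closure ⟨c b, b, rfl⟩

theorem e_mul_ar_of_ne {v : Q.V} {x : Q.A} (h : v ≠ Q.h x) : S.e v * S.ar x = 0 := by
  rw [← S.he_ar x, ← mul_assoc, S.e_orth _ _ h, zero_mul]

theorem ar_mul_e_of_ne {x : Q.A} {v : Q.V} (h : Q.t x ≠ v) : S.ar x * S.e v = 0 := by
  rw [← S.ar_te x, mul_assoc, S.e_orth _ _ h, mul_zero]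

theorem ar_mul_ar_of_ne {x y : Q.A} (h : Q.t x ≠ Q.h y) : S.ar x * S.ar y = 0 := by
  rw [← S.ar_te x, mul_assoc, S.e_mul_ar_of_ne h, mul_zero]

theorem e_mul_prod_eq_zero_or (v : Q.V) {p : List Q.A} (hp : p ≠ []) :
    S.e v * (p.map S.ar).prod = 0 ∨ S.e v * (p.map S.ar).prod = (p.map S.ar).prod := by
  obtain ⟨x, l, rfl⟩ := List.exists_cons_of_ne_nil hp
  rw [List.map_cons, List.prod_cons, ← mul_assoc]
  by_cases hv : v = Q.h x
  · exact .inr (by rw [hv, S.he_ar])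
  · exact .inl (by rw [S.e_mul_ar_of_ne hv, zero_mul])

theorem prod_mul_e_eq_zero_or {p : List Q.A} (hp : p ≠ []) (v : Q.V) :
    (p.map S.ar).prod * S.e v = 0 ∨ (p.map S.ar).prod * S.e v = (p.map S.ar).prod := by
  obtain ⟨l, x, rfl⟩ := (List.eq_nil_or_concat p).resolve_left hp
  simp only [List.concat_eq_append, List.map_append, List.map_cons, List.map_nil,
    List.prod_append, List.prod_cons, List.prod_nil, mul_one, mul_assoc]
  by_cases hv : Q.t x = v
  · exact .inr (by rw [← hv, S.ar_te])
  · exact .inl (by rw [S.ar_mul_e_of_ne hv, mul_zero])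

theorem prod_mul_prod_eq_zero_or {q p : List Q.A} (hq : Q.IsPath q) (hp : Q.IsPath p) :
    (q.map S.ar).prod * (p.map S.ar).prod = 0 ∨ Q.IsPath (q ++ p) := by
  rcases List.eq_nil_or_concat q with rfl | ⟨l, x, rfl⟩
  · exact .inr (by rwa [List.nil_append])
  rw [List.concat_eq_append] at hq ⊢
  rcases p with _ | ⟨y, m⟩
  · exact .inr (by rwa [List.append_nil])
  by_cases hxy : Q.t x = Q.h y
  · exact .inr (hq.append hp (by simp [hxy]))
  · refine .inl ?_
    simp only [List.map_append, List.map_cons, List.map_nil, List.prod_append, List.prod_cons,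
      List.prod_nil, mul_one]
    rw [mul_assoc, ← mul_assoc (S.ar x), S.ar_mul_ar_of_ne hxy, zero_mul, mul_zero]

theorem prod_mul_ι (p : List Q.A) (k : K) :
    ∃ μ : K, (p.map S.ar).prod * S.ι k = S.ι μ * (p.map S.ar).prod := by
  induction p generalizing k with
  | nil => exact ⟨k, by simp⟩
  | cons x l ih =>
    obtain ⟨μ, hμ⟩ := ih k
    exact ⟨σ x μ, by rw [List.map_cons, List.prod_cons, mul_assoc, hμ, ← mul_assoc,
      S.semilinear, mul_assoc]⟩

theorem pathElt_mul_ι (b : Q.PathIndex Q.IsPath) (k : K) :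
    ∃ μ : K, S.pathElt b * S.ι k = S.ι μ * S.pathElt b := by
  rcases b with v | q
  · exact ⟨k, S.e_comm v k⟩
  · exact S.prod_mul_ι q.1 k

variable {Z : Set (Q.A × Q.A)}

theorem pathElt_mul_prod_eq_zero_or (b : Q.PathIndex Q.IsPath) {p : List Q.A}
    (hp : Q.IsNonAdmissible Z p) :
    S.pathElt b * (p.map S.ar).prod = 0 ∨
      ∃ q, Q.IsNonAdmissible Z q ∧ S.pathElt b * (p.map S.ar).prod = (q.map S.ar).prod := by
  obtain ⟨hne, hpath, hZ⟩ := hp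
  rcases b with v | ⟨q, -, hq⟩
  · exact (S.e_mul_prod_eq_zero_or v hne).imp_right fun h => ⟨p, ⟨hne, hpath, hZ⟩, h⟩
  · refine (S.prod_mul_prod_eq_zero_or hq hpath).imp_right fun hqp =>
      ⟨q ++ p, ⟨by simp [hne], hqp, fun h => hZ (List.isChain_append.mp h).2.1⟩, ?_⟩
    rw [List.map_append, List.prod_append]
    rfl

theorem prod_mul_pathElt_eq_zero_or {p : List Q.A} (hp : Q.IsNonAdmissible Z p)
    (b : Q.PathIndex Q.IsPath) :
    (p.map S.ar).prod * S.pathElt b = 0 ∨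
      ∃ q, Q.IsNonAdmissible Z q ∧ (p.map S.ar).prod * S.pathElt b = (q.map S.ar).prod := by
  obtain ⟨hne, hpath, hZ⟩ := hp
  rcases b with v | ⟨q, -, hq⟩
  · exact (S.prod_mul_e_eq_zero_or hne v).imp_right fun h => ⟨p, ⟨hne, hpath, hZ⟩, h⟩
  · refine (S.prod_mul_prod_eq_zero_or hpath hq).imp_right fun hpq =>
      ⟨p ++ q, ⟨by simp [hne], hpq, fun h => hZ (List.isChain_append.mp h).1⟩, ?_⟩
    rw [List.map_append, List.prod_append]
    rfl

variable (Z)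

/-- The ideal `⟨Z⟩`. -/
def relIdeal : Ideal Λ :=
  Ideal.span {z | ∃ p ∈ Z, ∃ u : Λ, z = S.ar p.1 * S.ar p.2 * u}

def nonAdmissibleSpan : AddSubmonoid Λ :=
  AddSubmonoid.closure {x | ∃ (k : K) (p : List Q.A), Q.IsNonAdmissible Z p ∧
    x = S.ι k * (p.map S.ar).prod}

theorem prod_mem_nonAdmissibleSpan {p : List Q.A} (hp : Q.IsNonAdmissible Z p) :
    (p.map S.ar).prod ∈ S.nonAdmissibleSpan Z :=
  AddSubmonoid.subset_closure ⟨1, p, hp, by rw [map_one, one_mul]⟩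

open scoped Pointwise in
theorem mul_mem_nonAdmissibleSpan_left (r : Λ) {x : Λ} (hx : x ∈ S.nonAdmissibleSpan Z) :
    r * x ∈ S.nonAdmissibleSpan Z := by
  have hle : ⊤ * S.nonAdmissibleSpan Z ≤ S.nonAdmissibleSpan Z := by
    rw [← S.closure_ι_mul_pathElt_eq_top, nonAdmissibleSpan, AddSubmonoid.closure_mul_closure,
      AddSubmonoid.closure_le]
    rintro _ ⟨_, ⟨k, b, rfl⟩, _, ⟨k', p, hp, rfl⟩, rfl⟩
    obtain ⟨μ, hμ⟩ := S.pathElt_mul_ι b k'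
    have hmul : S.ι k * S.pathElt b * (S.ι k' * (p.map S.ar).prod) =
        S.ι (k * μ) * (S.pathElt b * (p.map S.ar).prod) := by
      rw [S.ι.map_mul, mul_assoc, ← mul_assoc (S.pathElt b), hμ]
      simp only [mul_assoc]
    dsimp only
    rw [hmul]
    rcases S.pathElt_mul_prod_eq_zero_or b hp with h0 | ⟨q, hq, hpq⟩
    · rw [h0, mul_zero]
      exact zero_mem _
    · rw [hpq]
      exact AddSubmonoid.subset_closure ⟨_, q, hq, rfl⟩
  exact hle (AddSubmonoid.mul_mem_mul (AddSubmonoid.mem_top r) hx)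

open scoped Pointwise in
theorem mul_mem_nonAdmissibleSpan_right (r : Λ) {x : Λ} (hx : x ∈ S.nonAdmissibleSpan Z) :
    x * r ∈ S.nonAdmissibleSpan Z := by
  have hle : S.nonAdmissibleSpan Z * ⊤ ≤ S.nonAdmissibleSpan Z := by
    rw [← S.closure_ι_mul_pathElt_eq_top, nonAdmissibleSpan, AddSubmonoid.closure_mul_closure,
      AddSubmonoid.closure_le]
    rintro _ ⟨_, ⟨k, p, hp, rfl⟩, _, ⟨k', b, rfl⟩, rfl⟩
    obtain ⟨μ, hμ⟩ := S.prod_mul_ι p k'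
    have hmul : S.ι k * (p.map S.ar).prod * (S.ι k' * S.pathElt b) =
        S.ι (k * μ) * ((p.map S.ar).prod * S.pathElt b) := by
      rw [S.ι.map_mul, mul_assoc, ← mul_assoc ((p.map S.ar).prod), hμ]
      simp only [mul_assoc]
    dsimp only
    rw [hmul]
    rcases S.prod_mul_pathElt_eq_zero_or hp b with h0 | ⟨q, hq, hpq⟩
    · rw [h0, mul_zero]
      exact zero_mem _
    · rw [hpq]
      exact AddSubmonoid.subset_closure ⟨_, q, hq, rfl⟩
  exact hle (AddSubmonoid.mul_mem_mul hx (AddSubmonoid.mem_top r))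

def nonAdmissibleIdeal : Ideal Λ :=
  { S.nonAdmissibleSpan Z with
    smul_mem' := fun r _ hx => S.mul_mem_nonAdmissibleSpan_left Z r hx }

theorem relIdeal_le_nonAdmissibleIdeal : S.relIdeal Z ≤ S.nonAdmissibleIdeal Z := by
  refine Ideal.span_le.mpr ?_
  rintro _ ⟨⟨x, y⟩, hxy, u, rfl⟩
  by_cases hc : Q.t x = Q.h y
  · have hp : Q.IsNonAdmissible Z [x, y] :=
      ⟨by simp, List.isChain_pair.mpr hc, fun h => List.isChain_pair.mp h hxy⟩
    have hprod := S.prod_mem_nonAdmissibleSpan Z hp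
    rw [List.map_cons, List.map_cons, List.map_nil, List.prod_cons, List.prod_cons,
      List.prod_nil, mul_one] at hprod
    exact S.mul_mem_nonAdmissibleSpan_right Z u hprod
  · rw [SetLike.mem_coe, S.ar_mul_ar_of_ne hc, zero_mul]
    exact zero_mem _

theorem nonAdmissibleSpan_le_map :
    S.nonAdmissibleSpan Z ≤ AddSubmonoid.map (S.pathSum Q.IsPath)
      (Finsupp.supported K K (Set.range (Q.admissibleIncl Z))ᶜ).toAddSubmonoid := by
  refine AddSubmonoid.closure_le.mpr ?_
  rintro _ ⟨k, p, ⟨hne, hpath, hZ⟩, rfl⟩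
  refine ⟨Finsupp.single (.inr ⟨p, hne, hpath⟩) k, Finsupp.single_mem_supported K k ?_,
    S.pathSum_single _ k⟩
  exact (Quiv.PathIndex.notMem_range_incl_iff _ _).mpr ⟨_, rfl, fun h => hZ h.2⟩

theorem pathSum_mem_relIdeal_iff (c : Q.PathIndex Q.IsPath →₀ K) :
    S.pathSum Q.IsPath c ∈ S.relIdeal Z ↔ ↑c.support ⊆ (Set.range (Q.admissibleIncl Z))ᶜ := by
  refine ⟨fun hc => ?_, fun hc => ?_⟩
  · obtain ⟨d, hd, hdc⟩ :=
      S.nonAdmissibleSpan_le_map Z (S.relIdeal_le_nonAdmissibleIdeal Z hc)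
    rw [← S.free.1 hdc]
    exact hd
  · rw [pathSum_apply]
    refine Ideal.sum_mem _ fun b hb => Ideal.mul_mem_left _ _ ?_
    obtain ⟨q, rfl, hq⟩ := (Quiv.PathIndex.notMem_range_incl_iff _ b).mp (hc hb)
    exact List.prod_map_mem_span_of_not_isChain S.ar fun h => hq ⟨q.2.2, h⟩

theorem bijective_map_pathSum_isAdmissible {Λ₀ : Type} [Ring Λ₀] (π : Λ →+* Λ₀)
    (hsurj : Function.Surjective π) (hker : ∀ y, π y = 0 ↔ y ∈ S.relIdeal Z) :
    Function.Bijective fun c : Q.PathIndex (Q.IsAdmissible Z) →₀ K => π (S.pathSum _ c) := by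
  have := Finsupp.bijective_comp_embDomain ((π : Λ →+ Λ₀).comp (S.pathSum Q.IsPath))
    (hsurj.comp S.free.2) (Q.admissibleIncl Z) fun c =>
      (hker _).trans (S.pathSum_mem_relIdeal_iff Z c)
  convert this using 1
  funext c
  exact congrArg π (S.pathSum_embDomain_incl _ c).symm

end SLPA

theorem stmt18_general (K : Type) [DivisionRing K] (Q : Quiv) [Fintype Q.V]
    (σ : Q.A → K ≃+* K) (Z : Set (Q.A × Q.A))
    (Λfree Λ₀ : Type) [Ring Λfree] [Ring Λ₀] (S : SLPA K Q σ Λfree)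
    (π : Λfree →+* Λ₀) (hsurj : Function.Surjective π)
    (hker : ∀ y : Λfree, π y = 0 ↔
      y ∈ Ideal.span {z : Λfree | ∃ p ∈ Z, ∃ u : Λfree, z = S.ar p.1 * S.ar p.2 * u}) :
    Function.Bijective
      (fun c : (Q.V ⊕ {p : List Q.A // p ≠ [] ∧ Q.IsPath p ∧
          p.Chain' (fun x y => (x, y) ∉ Z)}) →₀ K =>
        π (c.sum fun p lam => S.ι lam * Sum.elim S.e (fun q => (q.1.map S.ar).prod) p)) ∧
    ((∃ (n : ℕ) (g : Fin n → Λ₀), ∀ x : Λ₀, ∃ c : Fin n → K,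
        x = ∑ i, π (S.ι (c i)) * g i) ↔
      {p : List Q.A | Q.IsPath p ∧ p.Chain' (fun x y => (x, y) ∉ Z)}.Finite) := by
  have hbasis := S.bijective_map_pathSum_isAdmissible Z π hsurj hker
  let _ : Module K Λ₀ := Module.compHom Λ₀ (π.comp S.ι)
  have hlin : ⇑(Finsupp.linearCombination K fun b : Q.PathIndex (Q.IsAdmissible Z) =>
      π (S.pathElt b)) = fun c => π (S.pathSum _ c) := by
    funext c
    rw [Finsupp.linearCombination_apply, SLPA.pathSum_apply, map_finsuppSum]
    simp only [map_mul]
    rfl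
  exact ⟨hbasis, (exists_fin_spanning_iff_finite_of_bijective (hlin ▸ hbasis)).trans
    (finite_sum_subtype_ne_nil_iff (V := Q.V) _)⟩

/-- In `Λ₀ = K_σ Q/⟨Z⟩` (modelled by a surjection `π` from the semilinear path algebra
with kernel `⟨Z⟩`), the images of the `Z`-avoiding paths form a left `K`-basis; hence
`Λ₀` is finite-dimensional over `K` iff `(Q,Z)` is gentle (finitely many admissible
paths). -/
theorem stmt18 (K : Type) [DivisionRing K] (Q : Quiv) [Fintype Q.V] [Finite Q.A]
    (σ : Q.A → K ≃+* K) (Z : Set (Q.A × Q.A)) (lg : LocallyGentle Q Z)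
    (Λfree Λ₀ : Type) [Ring Λfree] [Ring Λ₀] (S : SLPA K Q σ Λfree)
    (π : Λfree →+* Λ₀) (hsurj : Function.Surjective π)
    (hker : ∀ y : Λfree, π y = 0 ↔
      y ∈ Ideal.span {z : Λfree | ∃ p ∈ Z, ∃ u : Λfree, z = S.ar p.1 * S.ar p.2 * u}) :
    Function.Bijective
      (fun c : (Q.V ⊕ {p : List Q.A // p ≠ [] ∧ Q.IsPath p ∧
          p.Chain' (fun x y => (x, y) ∉ Z)}) →₀ K =>
        π (c.sum fun p lam => S.ι lam * Sum.elim S.e (fun q => (q.1.map S.ar).prod) p)) ∧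
    ((∃ (n : ℕ) (g : Fin n → Λ₀), ∀ x : Λ₀, ∃ c : Fin n → K,
        x = ∑ i, π (S.ι (c i)) * g i) ↔
      {p : List Q.A | Q.IsPath p ∧ p.Chain' (fun x y => (x, y) ∉ Z)}.Finite) :=
  stmt18_general K Q σ Z Λfree Λ₀ S π hsurj hker
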